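/- For 1 <= i < j <= n-1, the number G_1([a,b]) of complete Gessel words of length 2n with 1bar at position a and 1 at position b satisfies G_1([2i,2j]) = G_1([2i,2j+1]) = G_1([2i+1,2j]) = G_1([2i+1,2j+1]). -/

import Mathlib

/-- The alphabet of Gessel words: letters `1`, `2`, `1̄`, `2̄`. -/
inductive GLetter | one | two | onebar | twobar
deriving DecidableEq

instance instFintypeGLetter : Fintype GLetter where
  elems := {.one, .two, .onebar, .twobar}
  complete := by intro x; cases x <;> simp

open Classical

/-- Number of occurrences of the letter `x` among the first `k` letters of `w`. -/
noncomputable def cnt (m : ℕ) (w : Fin m → GLetter) (x : GLetter) (k : ℕ) : ℕ :=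
  (Finset.univ.filter (fun i : Fin m => (i : ℕ) < k ∧ w i = x)).card

/-- Gessel word condition: every prefix has `N₂ ≥ N_{2̄}` and `N₁+N₂ ≥ N_{1̄}+N_{2̄}`. -/
def IsGessel (m : ℕ) (w : Fin m → GLetter) : Prop :=
  ∀ k ≤ m, cnt m w .twobar k ≤ cnt m w .two k ∧
    cnt m w .onebar k + cnt m w .twobar k ≤ cnt m w .one k + cnt m w .two k

/-- Complete: equally many occurrences of each letter and its bar. -/
def IsCompleteGW (m : ℕ) (w : Fin m → GLetter) : Prop :=
  cnt m w .one m = cnt m w .onebar m ∧ cnt m w .two m = cnt m w .twobar m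
/-- `G1 n a b` is the number of complete Gessel words of length `2n` with exactly one
`1̄`, located at (1-indexed) position `a`, and exactly one `1`, at position `b`. -/
noncomputable def G1 (n a b : ℕ) : ℕ :=
  ((Finset.univ : Finset (Fin (2 * n) → GLetter)).filter
    (fun w => IsGessel (2 * n) w ∧ IsCompleteGW (2 * n) w ∧
      (∀ t : Fin (2 * n), (w t = .onebar ↔ (t : ℕ) + 1 = a) ∧
        (w t = .one ↔ (t : ℕ) + 1 = b)))).card


/-!
Swapping the two letters at positions `p` and `p + 1`, for `p` even, changes only the prefix
of length `p`. If the `1` does not occur before position `p`, the prefix of odd length `p - 1`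
consists of `2`, `2̄` and at most one `1̄`, so by parity both `N₂ - N_{2̄}` and
`N₁ + N₂ - N_{1̄} - N_{2̄}` are at least `1` there, and any letter may follow it.
The swap is therefore an involution between the words counted by `G1 n a b` and by
`G1 n (τ a) (τ b)`, where `τ` transposes `p` and `p + 1`.
-/

section Words

variable {m : ℕ}

lemma cnt_succ (w : Fin m → GLetter) (x : GLetter) {k : ℕ} (hk : k < m) :
    cnt m w x (k + 1) = cnt m w x k + if w ⟨k, hk⟩ = x then 1 else 0 := by
  have hsplit : Finset.univ.filter (fun i : Fin m => (i : ℕ) < k + 1 ∧ w i = x) =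
      Finset.univ.filter (fun i : Fin m => (i : ℕ) < k ∧ w i = x) ∪
        ({⟨k, hk⟩} : Finset (Fin m)).filter (fun i => w i = x) := by
    ext i
    simp only [Finset.mem_union, Finset.mem_filter, Finset.mem_univ, true_and,
      Finset.mem_singleton, Fin.ext_iff, ← or_and_right, Nat.lt_succ_iff_lt_or_eq]
  rw [cnt, cnt, hsplit, Finset.card_union_of_disjoint, Finset.filter_singleton]
  · split_ifs <;> rfl
  · simp only [Finset.disjoint_left, Finset.mem_filter, Finset.mem_univ, true_and,
      Finset.mem_singleton, Fin.ext_iff]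
    omega

lemma cnt_comp_perm (w : Fin m → GLetter) (x : GLetter) (k : ℕ) (σ : Equiv.Perm (Fin m))
    (hσ : ∀ i, (σ i : ℕ) < k ↔ (i : ℕ) < k) :
    cnt m (w ∘ σ) x k = cnt m w x k :=
  Finset.card_equiv σ (by simp [hσ])

lemma cnt_total (w : Fin m → GLetter) {k : ℕ} (hk : k ≤ m) :
    cnt m w .one k + cnt m w .two k + cnt m w .onebar k + cnt m w .twobar k = k := by
  induction k with
  | zero => simp [cnt]
  | succ k ih =>
    simp only [cnt_succ w _ hk]
    have := ih (by omega)
    cases w ⟨k, hk⟩ <;> simp <;> omega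

lemma IsCompleteGW.comp_perm {w : Fin m → GLetter} (hw : IsCompleteGW m w)
    (σ : Equiv.Perm (Fin m)) : IsCompleteGW m (w ∘ σ) := by
  simpa only [IsCompleteGW, cnt_comp_perm w _ m σ (by simp)] using hw

lemma IsGessel.strict_of_odd {w : Fin m → GLetter} (hw : IsGessel m w) {c : ℕ} (hodd : Odd c)
    (hcm : c ≤ m) (hone : cnt m w .one c = 0) :
    cnt m w .twobar c < cnt m w .two c ∧
      cnt m w .onebar c + cnt m w .twobar c < cnt m w .one c + cnt m w .two c := by
  obtain ⟨r, rfl⟩ := hodd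
  have := cnt_total w hcm
  have := hw _ hcm
  omega

def OccursOnlyAt (w : Fin m → GLetter) (x : GLetter) (p : ℕ) : Prop :=
  ∀ t : Fin m, w t = x ↔ (t : ℕ) + 1 = p

lemma OccursOnlyAt.cnt_eq_zero {w : Fin m → GLetter} {x : GLetter} {p k : ℕ}
    (h : OccursOnlyAt w x p) (hk : k < p) : cnt m w x k = 0 :=
  Finset.card_eq_zero.2 <| Finset.filter_eq_empty_iff.2 fun t _ ⟨htk, hx⟩ => by
    have := (h t).1 hx
    omega

def IsG1Word (m a b : ℕ) (w : Fin m → GLetter) : Prop :=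
  IsGessel m w ∧ IsCompleteGW m w ∧ OccursOnlyAt w .onebar a ∧ OccursOnlyAt w .one b

def adjSwap (c : ℕ) (hc : c + 1 < m) : Equiv.Perm (Fin m) :=
  Equiv.swap ⟨c, by omega⟩ ⟨c + 1, hc⟩

variable {c : ℕ} (hc : c + 1 < m)

lemma val_adjSwap (t : Fin m) : (adjSwap c hc t : ℕ) = Equiv.swap c (c + 1) (t : ℕ) :=
  Fin.val_injective.map_swap _ _ _

lemma cnt_comp_adjSwap_of_ne (w : Fin m → GLetter) (x : GLetter) {k : ℕ} (hk : k ≠ c + 1) :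
    cnt m (w ∘ adjSwap c hc) x k = cnt m w x k :=
  cnt_comp_perm w x k _ fun i => by
    rw [val_adjSwap, Equiv.swap_apply_def]
    split_ifs <;> omega

lemma cnt_comp_adjSwap_succ (w : Fin m → GLetter) (x : GLetter) :
    cnt m (w ∘ adjSwap c hc) x (c + 1) =
      cnt m w x c + if w ⟨c + 1, hc⟩ = x then 1 else 0 := by
  rw [cnt_succ _ _ (by omega), cnt_comp_adjSwap_of_ne hc w x (by omega)]
  simp [adjSwap]

lemma IsGessel.comp_adjSwap {w : Fin m → GLetter} (hw : IsGessel m w)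
    (hstrict : cnt m w .twobar c < cnt m w .two c ∧
      cnt m w .onebar c + cnt m w .twobar c < cnt m w .one c + cnt m w .two c) :
    IsGessel m (w ∘ adjSwap c hc) := by
  intro k hk
  rcases eq_or_ne k (c + 1) with rfl | hkc
  · simp only [cnt_comp_adjSwap_succ]
    cases w ⟨c + 1, hc⟩ <;> simp <;> omega
  · simpa only [cnt_comp_adjSwap_of_ne hc w _ hkc] using hw k hk

-- `p` is 1-indexed, so swapping the 0-indexed positions `c`, `c + 1` moves it by
-- `Equiv.swap (c + 1) (c + 2)`.
lemma OccursOnlyAt.comp_adjSwap {w : Fin m → GLetter} {x : GLetter} {p : ℕ}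
    (h : OccursOnlyAt w x p) :
    OccursOnlyAt (w ∘ adjSwap c hc) x (Equiv.swap (c + 1) (c + 2) p) := by
  intro t
  rw [Function.comp_apply, h, val_adjSwap]
  simp only [Equiv.swap_apply_def]
  split_ifs <;> omega

lemma IsG1Word.comp_adjSwap {a b : ℕ} {w : Fin m → GLetter} (hw : IsG1Word m a b w)
    (hodd : Odd c) (hb : c + 1 ≤ b) :
    IsG1Word m (Equiv.swap (c + 1) (c + 2) a) (Equiv.swap (c + 1) (c + 2) b)
      (w ∘ adjSwap c hc) :=
  ⟨hw.1.comp_adjSwap hc (hw.1.strict_of_odd hodd (by omega) (hw.2.2.2.cnt_eq_zero hb)),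
    hw.2.1.comp_perm _, hw.2.2.1.comp_adjSwap hc, hw.2.2.2.comp_adjSwap hc⟩

end Words

lemma G1_eq_card_filter (n a b : ℕ) :
    G1 n a b = (Finset.univ.filter (IsG1Word (2 * n) a b)).card := by
  unfold G1
  congr 1
  ext w
  simp only [Finset.mem_filter, Finset.mem_univ, true_and, IsG1Word, OccursOnlyAt, forall_and]

lemma G1_eq_G1_swap (n a b p : ℕ) (hp : Even p) (hp0 : 0 < p) (hpn : p < 2 * n) (hb : p ≤ b) :
    G1 n a b = G1 n (Equiv.swap p (p + 1) a) (Equiv.swap p (p + 1) b) := by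
  obtain ⟨c, rfl⟩ : ∃ c, p = c + 1 := ⟨p - 1, by omega⟩
  have hodd : Odd c := Nat.not_even_iff_odd.1 (Nat.even_add_one.1 hp)
  have hc : c + 1 < 2 * n := hpn
  have hswap_b : c + 1 ≤ Equiv.swap (c + 1) (c + 2) b := by
    rw [Equiv.swap_apply_def]
    split_ifs <;> omega
  rw [G1_eq_card_filter, G1_eq_card_filter]
  refine Finset.card_nbij' (· ∘ adjSwap c hc) (· ∘ adjSwap c hc) ?_ ?_ ?_ ?_
  · intro w hw
    simp only [Finset.coe_filter, Finset.mem_univ, true_and, Set.mem_ofPred_eq] at hw ⊢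
    exact hw.comp_adjSwap hc hodd hb
  · intro w hw
    simp only [Finset.coe_filter, Finset.mem_univ, true_and, Set.mem_ofPred_eq] at hw ⊢
    simpa only [Equiv.swap_apply_self] using hw.comp_adjSwap hc hodd hswap_b
  all_goals intro w _; ext; simp [adjSwap]

/-- The counts of complete Gessel words with `1̄` at position `2i` or `2i+1`
and `1` at position `2j` or `2j+1` all agree, for `1 ≤ i < j ≤ n-1`. -/
theorem gessel_diamond (n i j : ℕ) (hi : 1 ≤ i) (hij : i < j) (hj : j ≤ n - 1) :
    G1 n (2 * i) (2 * j) = G1 n (2 * i) (2 * j + 1) ∧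
    G1 n (2 * i) (2 * j) = G1 n (2 * i + 1) (2 * j) ∧
    G1 n (2 * i) (2 * j) = G1 n (2 * i + 1) (2 * j + 1) := by
  have move_one (a : ℕ) (ha : a < 2 * j) : G1 n a (2 * j) = G1 n a (2 * j + 1) := by
    simpa [Equiv.swap_apply_of_ne_of_ne, ha.ne, (ha.trans (Nat.lt_succ_self _)).ne] using
      G1_eq_G1_swap n a (2 * j) (2 * j) (even_two_mul j) (by omega) (by omega) le_rfl
  have move_onebar : G1 n (2 * i) (2 * j) = G1 n (2 * i + 1) (2 * j) := by
    simpa [Equiv.swap_apply_of_ne_of_ne, show 2 * j ≠ 2 * i by omega,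
      show 2 * j ≠ 2 * i + 1 by omega] using
      G1_eq_G1_swap n (2 * i) (2 * j) (2 * i) (even_two_mul i) (by omega) (by omega) (by omega)
  exact ⟨move_one _ (by omega), move_onebar, move_onebar.trans (move_one _ (by omega))⟩
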